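/- Let $G=(V,E)$ be a finite graph and $S\subseteq V$ a neighborhood packing, with $\deg(S)=\sum_{v\in S}\deg(v)$. Then for all $k\ge0$, $\dim\tilde H_k(I(G);\mathbb{R})\le\sum_{m=|S|}^{k+1}\binom{\deg(S)}{m}\binom{|V|-\deg(S)}{k+1-m}$. In particular, $\tilde H_k(I(G);\mathbb{R})=0$ for all $k\le|S|-2$. -/

import Mathlib

open Matrix

variable {V : Type*} [Fintype V] [DecidableEq V] [LinearOrder V]

/-- Faces of the independence complex of `G` of cardinality `k`. -/
abbrev SimpleGraph.indepFace (G : SimpleGraph V) [DecidableRel G.Adj] (k : ℕ) :=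
  {σ : Finset V // σ.card = k ∧ ∀ u ∈ σ, ∀ v ∈ σ, ¬ G.Adj u v}

/-- The simplicial boundary matrix of the independence complex. -/
noncomputable def SimpleGraph.indepBoundary (G : SimpleGraph V) [DecidableRel G.Adj] (k : ℕ) :
    Matrix (G.indepFace k) (G.indepFace (k+1)) ℝ :=
  Matrix.of fun σ τ =>
    if σ.1 ⊆ τ.1 then ∑ v ∈ τ.1 \ σ.1, (-1 : ℝ) ^ ((τ.1.filter (· < v)).card) else 0

/-- `dim H̃_k(I(G); ℝ)`. -/
noncomputable def SimpleGraph.indepHomologyDim (G : SimpleGraph V) [DecidableRel G.Adj]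
    (k : ℕ) : ℕ :=
  Module.finrank ℝ (LinearMap.ker (G.indepBoundary k).mulVecLin) -
    Module.finrank ℝ (LinearMap.range (G.indepBoundary (k+1)).mulVecLin)

/-!
Say that a face `σ` of `I(G)` totally dominates `T ⊆ V` if it meets `N(v)` for every `v ∈ T`.
Every `k`-cycle vanishing on the faces that totally dominate `S` is a boundary, so
`dim H̃_k(I(G))` is at most the number of such faces with `k + 1` vertices. To see this, add the
vertices `a ∈ S` to `T` one at a time: the part of the cycle on faces totally dominating `T` lives
on faces missing `N(a)`, which form a cone with apex `a`, and is coned off; the correction stays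
off the faces totally dominating `T` because `a` lies in no `N(v)`, `v ∈ T`. Finally, a face
totally dominating `S` meets each of the pairwise disjoint sets `N(v)`, `v ∈ S`, so it has at
least `|S|` of its vertices in their union, a set of `deg S` vertices.
-/

open Finset

theorem Finset.exists_eq_insert_insert_of_subset {α : Type*} [DecidableEq α] {s t : Finset α}
    (hst : s ⊆ t) (hcard : #t = #s + 2) :
    ∃ a b, a ≠ b ∧ a ∉ s ∧ b ∉ s ∧ t = insert a (insert b s) := by
  obtain ⟨a, b, hab, hd⟩ := card_eq_two.1 (show #(t \ s) = 2 by
    rw [card_sdiff_of_subset hst]; omega)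
  have ha : a ∈ t \ s := by simp [hd]
  have hb : b ∈ t \ s := by simp [hd]
  refine ⟨a, b, hab, (mem_sdiff.1 ha).2, (mem_sdiff.1 hb).2, ?_⟩
  rw [← union_sdiff_of_subset hst, hd, union_comm, insert_union, singleton_union, insert_comm]

theorem Finset.eq_insert_or_eq_insert_of_subset {α : Type*} [DecidableEq α] {s r : Finset α}
    {a b : α} (hsr : s ⊆ r) (hr : r ⊆ insert a (insert b s)) (hcard : #s + 1 = #r) :
    r = insert a s ∨ r = insert b s := by
  obtain ⟨w, hw, rfl⟩ := exists_eq_insert_iff.2 ⟨hsr, hcard⟩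
  rcases mem_insert.1 (hr (mem_insert_self w s)) with rfl | hw'
  · exact .inl rfl
  rcases mem_insert.1 hw' with rfl | hws
  · exact .inr rfl
  · exact absurd hws hw

theorem Finset.card_filter_powersetCard_le_sum_choose {α : Type*} [Fintype α] [DecidableEq α]
    (A : Finset α) (r k : ℕ) :
    #{s ∈ powersetCard k (univ : Finset α) | r ≤ #(s ∩ A)}
      ≤ ∑ m ∈ Icc r k, (#A).choose m * (Fintype.card α - #A).choose (k - m) := by
  have hcover : {s ∈ powersetCard k (univ : Finset α) | r ≤ #(s ∩ A)}
      ⊆ (Icc r k).biUnion fun m =>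
        (powersetCard m A ×ˢ powersetCard (k - m) Aᶜ).image fun p => p.1 ∪ p.2 := by
    intro s hs
    obtain ⟨hs, hr⟩ := mem_filter.1 hs
    have hk := (mem_powersetCard.1 hs).2
    have hsplit := card_inter_add_card_sdiff s A
    refine mem_biUnion.2 ⟨#(s ∩ A), mem_Icc.2 ⟨hr, by omega⟩, mem_image.2
      ⟨(s ∩ A, s \ A), mem_product.2 ⟨mem_powersetCard.2 ⟨inter_subset_right, rfl⟩,
        mem_powersetCard.2 ⟨fun x hx => mem_compl.2 (mem_sdiff.1 hx).2,
          show #(s \ A) = _ by omega⟩⟩, ?_⟩⟩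
    rw [union_comm, sdiff_union_inter]
  calc _ ≤ _ := card_le_card hcover
    _ ≤ _ := card_biUnion_le
    _ ≤ _ := sum_le_sum fun m _ => card_image_le.trans_eq <| by
      rw [card_product, card_powersetCard, card_powersetCard, card_compl]

theorem Submodule.finrank_le_finrank_add_card {K ι : Type*} [Field K] [Fintype ι]
    {p : ι → Prop} [DecidablePred p] {C B : Submodule K (ι → K)}
    (h : ∀ x ∈ C, (∀ i, p i → x i = 0) → x ∈ B) :
    Module.finrank K C ≤ Module.finrank K B + Fintype.card {i // p i} := by
  let f : C →ₗ[K] {i // p i} → K := LinearMap.funLeft K K Subtype.val ∘ₗ C.subtype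
  have hker : (LinearMap.ker f).map C.subtype ≤ B := by
    rintro _ ⟨x, hx, rfl⟩
    exact h x x.2 fun i hi => congrFun hx ⟨i, hi⟩
  calc Module.finrank K C
      = Module.finrank K (LinearMap.ker f) + Module.finrank K (LinearMap.range f) := by
        rw [add_comm, LinearMap.finrank_range_add_finrank_ker]
    _ ≤ _ := by
      gcongr
      · rw [← finrank_map_subtype_eq]
        exact finrank_mono hker
      · exact (finrank_le _).trans_eq (Module.finrank_fintype_fun_eq_card K)

section FaceSign

variable {α : Type*} [LinearOrder α]

/-- The sign of the facet `τ.erase v` in the boundary of `τ`: `(-1) ^ i` if `v` is the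
`i`-th smallest element of `τ`, counting from `0`. -/
def faceSign (τ : Finset α) (v : α) : ℝ := (-1) ^ #(τ.filter (· < v))

theorem faceSign_insert [DecidableEq α] {τ : Finset α} {w : α} (hw : w ∉ τ) (u : α) :
    faceSign (insert w τ) u = (if w < u then -1 else 1) * faceSign τ u := by
  unfold faceSign
  rw [filter_insert]
  split_ifs
  · rw [card_insert_of_notMem fun h => hw (mem_filter.1 h).1, pow_succ, mul_comm]
  · rw [one_mul]

theorem faceSign_mul_self (τ : Finset α) (v : α) : faceSign τ v * faceSign τ v = 1 := by
  rw [faceSign, ← pow_add, ← two_mul, pow_mul, neg_one_sq, one_pow]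

theorem faceSign_swap [DecidableEq α] {σ : Finset α} {a b : α} (ha : a ∉ σ) (hb : b ∉ σ)
    (hab : a ≠ b) :
    faceSign (insert a σ) a * faceSign (insert a (insert b σ)) b
      = -(faceSign (insert b σ) b * faceSign (insert a (insert b σ)) a) := by
  rw [faceSign_insert (by simp [hab, ha] : a ∉ insert b σ) b, insert_comm,
    faceSign_insert (by simp [hab.symm, hb] : b ∉ insert a σ) a]
  rcases hab.lt_or_gt with h | h <;> simp only [h, h.not_gt, if_true, if_false] <;> ring

end FaceSign

namespace SimpleGraph

section Packing

variable {α : Type*} [Fintype α] (G : SimpleGraph α) [DecidableRel G.Adj]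

def IsNeighborhoodPacking [DecidableEq α] (S : Finset α) : Prop :=
  ∀ u ∈ S, ∀ v ∈ S, u ≠ v →
    Disjoint (insert u (G.neighborFinset u)) (insert v (G.neighborFinset v))

def TotallyDominates (s T : Finset α) : Prop := ∀ v ∈ T, ¬Disjoint s (G.neighborFinset v)

instance [DecidableEq α] (s T : Finset α) : Decidable (G.TotallyDominates s T) :=
  inferInstanceAs (Decidable (∀ v ∈ T, _))

variable {G}

theorem TotallyDominates.mono {s t T : Finset α} (hst : s ⊆ t) (hs : G.TotallyDominates s T) :
    G.TotallyDominates t T :=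
  fun v hv hdisj => hs v hv (hdisj.mono_left hst)

theorem TotallyDominates.erase [DecidableEq α] {s T : Finset α} {a : α}
    (ha : ∀ v ∈ T, a ∉ G.neighborFinset v) (hs : G.TotallyDominates s T) :
    G.TotallyDominates (s.erase a) T := by
  intro v hv hdisj
  rw [disjoint_erase_comm, erase_eq_of_notMem (ha v hv)] at hdisj
  exact hs v hv hdisj

namespace IsNeighborhoodPacking

variable [DecidableEq α] {S : Finset α} (hS : G.IsNeighborhoodPacking S)
include hS

theorem notMem_neighborFinset {u v : α} (hu : u ∈ S) (hv : v ∈ S) (huv : u ≠ v) :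
    u ∉ G.neighborFinset v := fun h =>
  Finset.disjoint_left.1 (hS u hu v hv huv) (mem_insert_self u _) (mem_insert_of_mem h)

theorem pairwiseDisjoint_neighborFinset :
    (S : Set α).PairwiseDisjoint fun v => G.neighborFinset v :=
  fun u hu v hv huv => (hS u hu v hv huv).mono (subset_insert _ _) (subset_insert _ _)

theorem card_biUnion_neighborFinset :
    #(S.biUnion fun v => G.neighborFinset v) = ∑ v ∈ S, G.degree v := by
  rw [card_biUnion hS.pairwiseDisjoint_neighborFinset]
  exact sum_congr rfl fun v _ => G.card_neighborFinset_eq_degree v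

theorem card_le_card_inter_biUnion {s : Finset α} (hs : G.TotallyDominates s S) :
    #S ≤ #(s ∩ S.biUnion fun v => G.neighborFinset v) := by
  rw [inter_biUnion, card_biUnion fun u hu v hv huv =>
    (hS.pairwiseDisjoint_neighborFinset hu hv huv).mono inter_subset_right inter_subset_right,
    card_eq_sum_ones]
  exact sum_le_sum fun v hv => (not_disjoint_iff_nonempty_inter.1 (hs v hv)).card_pos

end IsNeighborhoodPacking

end Packing

variable (G : SimpleGraph V) [DecidableRel G.Adj]

def eraseFace {n : ℕ} (τ : G.indepFace (n + 1)) (v : V) (hv : v ∈ τ.1) : G.indepFace n :=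
  ⟨τ.1.erase v, by rw [card_erase_of_mem hv, τ.2.1, Nat.add_sub_cancel],
    fun x hx y hy => τ.2.2 x (mem_of_mem_erase hx) y (mem_of_mem_erase hy)⟩

def insertFace {n : ℕ} (σ : G.indepFace n) (v : V) (hv : v ∉ σ.1)
    (hN : Disjoint σ.1 (G.neighborFinset v)) : G.indepFace (n + 1) :=
  ⟨insert v σ.1, by rw [card_insert_of_notMem hv, σ.2.1], by
    have hvσ : ∀ u ∈ σ.1, ¬G.Adj v u := fun u hu hadj =>
      Finset.disjoint_left.1 hN hu ((G.mem_neighborFinset v u).2 hadj)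
    simp only [mem_insert, forall_eq_or_imp]
    exact ⟨⟨G.irrefl, hvσ⟩, fun u hu => ⟨fun h => hvσ u hu h.symm, σ.2.2 u hu⟩⟩⟩

/-- The cone with apex `a`, `σ ↦ ±(σ ∪ {a})`: a chain homotopy from the identity to `0` on the
chains supported on faces missing `N(a)`. -/
noncomputable def indepCone (a : V) (n : ℕ) : Matrix (G.indepFace (n + 1)) (G.indepFace n) ℝ :=
  of fun τ σ => if τ.1 = insert a σ.1 ∧ a ∉ σ.1 then faceSign τ.1 a else 0

def undominatedChains (T : Finset V) (k : ℕ) : Submodule ℝ (G.indepFace k → ℝ) where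
  carrier := {x | ∀ σ, G.TotallyDominates σ.1 T → x σ = 0}
  add_mem' hx hy σ hσ := by rw [Pi.add_apply, hx σ hσ, hy σ hσ, add_zero]
  zero_mem' _ _ := rfl
  smul_mem' c x hx σ hσ := by rw [Pi.smul_apply, hx σ hσ, smul_zero]

variable {G} {a : V} {k n : ℕ}

omit [Fintype V] [DecidableEq V] [LinearOrder V] in
theorem indepFace_eq_of_subset {σ τ : G.indepFace k} (h : σ.1 ⊆ τ.1) : σ = τ :=
  Subtype.ext (eq_of_subset_of_card_le h (by rw [σ.2.1, τ.2.1]))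

omit [Fintype V] in
theorem indepBoundary_apply_of_not_subset {σ : G.indepFace k} {τ : G.indepFace (k + 1)}
    (h : ¬σ.1 ⊆ τ.1) : G.indepBoundary k σ τ = 0 :=
  if_neg h

theorem indepBoundary_apply_of_eq_insert {σ : G.indepFace k} {τ : G.indepFace (k + 1)} {w : V}
    (hw : w ∉ σ.1) (h : τ.1 = insert w σ.1) : G.indepBoundary k σ τ = faceSign τ.1 w := by
  rw [indepBoundary, of_apply, if_pos (h ▸ subset_insert w σ.1), h,
    insert_sdiff_of_notMem _ hw, sdiff_self, bot_eq_empty, insert_empty, sum_singleton, faceSign]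

omit [Fintype V] in
theorem indepBoundary_mul_apply_eq_zero {σ : G.indepFace k} {ρ : G.indepFace (k + 1)}
    {τ : G.indepFace (k + 2)} (h : ¬(σ.1 ⊆ ρ.1 ∧ ρ.1 ⊆ τ.1)) :
    G.indepBoundary k σ ρ * G.indepBoundary (k + 1) ρ τ = 0 := by
  rcases not_and_or.1 h with h | h
  · rw [indepBoundary_apply_of_not_subset h, zero_mul]
  · rw [indepBoundary_apply_of_not_subset h, mul_zero]

theorem indepBoundary_mul_indepBoundary (k : ℕ) :
    G.indepBoundary k * G.indepBoundary (k + 1) = 0 := by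
  ext σ τ
  rw [mul_apply, Matrix.zero_apply]
  by_cases hστ : σ.1 ⊆ τ.1
  swap
  · exact sum_eq_zero fun ρ _ => indepBoundary_mul_apply_eq_zero fun h => hστ (h.1.trans h.2)
  obtain ⟨a, b, hab, ha, hb, hτ⟩ := exists_eq_insert_insert_of_subset hστ (by rw [σ.2.1, τ.2.1])
  have haτ : a ∈ τ.1 := by simp [hτ]
  have hbτ : b ∈ τ.1 := by simp [hτ]
  have hτa : (G.eraseFace τ a haτ).1 = insert b σ.1 := by
    simp only [eraseFace, hτ, erase_insert (by simp [hab, ha] : a ∉ insert b σ.1)]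
  have hτb : (G.eraseFace τ b hbτ).1 = insert a σ.1 := by
    simp only [eraseFace, hτ, erase_insert_of_ne hab, erase_insert hb]
  have hmid : ∀ ρ, ρ ≠ G.eraseFace τ b hbτ ∧ ρ ≠ G.eraseFace τ a haτ →
      G.indepBoundary k σ ρ * G.indepBoundary (k + 1) ρ τ = 0 := by
    rintro ρ ⟨hρb, hρa⟩
    refine indepBoundary_mul_apply_eq_zero fun ⟨hσρ, hρτ⟩ => ?_
    rcases eq_insert_or_eq_insert_of_subset hσρ (hτ ▸ hρτ) (by rw [σ.2.1, ρ.2.1]) with h | h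
    · exact hρb (Subtype.ext (h.trans hτb.symm))
    · exact hρa (Subtype.ext (h.trans hτa.symm))
  have hne : G.eraseFace τ b hbτ ≠ G.eraseFace τ a haτ := fun h =>
    hab (by simpa [hτa, hτb, ha] using congrArg (a ∈ ·.1) h)
  rw [Fintype.sum_eq_add _ _ hne hmid,
    indepBoundary_apply_of_eq_insert ha hτb, indepBoundary_apply_of_eq_insert hb hτa,
    indepBoundary_apply_of_eq_insert (w := b) (by simp [hτb, hab.symm, hb])
      (by rw [hτb, hτ, insert_comm]),
    indepBoundary_apply_of_eq_insert (w := a) (by simp [hτa, hab, ha]) (by rw [hτa, hτ]),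
    hτa, hτb, hτ, faceSign_swap ha hb hab, neg_add_cancel]

theorem sum_indepCone_mul_of_mem {τ : G.indepFace (n + 1)} (ha : a ∈ τ.1)
    (f : G.indepFace n → ℝ) :
    ∑ σ, G.indepCone a n τ σ * f σ = faceSign τ.1 a * f (G.eraseFace τ a ha) := by
  rw [Fintype.sum_eq_single (G.eraseFace τ a ha), indepCone, of_apply,
    if_pos ⟨(insert_erase ha).symm, notMem_erase a _⟩]
  rintro σ hσ
  rw [indepCone, of_apply, if_neg, zero_mul]
  rintro ⟨hτ, haσ⟩
  exact hσ (Subtype.ext (show σ.1 = τ.1.erase a by rw [hτ, erase_insert haσ]))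

theorem sum_indepCone_mul_of_notMem {τ : G.indepFace (n + 1)} (ha : a ∉ τ.1)
    (f : G.indepFace n → ℝ) : ∑ σ, G.indepCone a n τ σ * f σ = 0 :=
  sum_eq_zero fun σ _ => by
    rw [indepCone, of_apply, if_neg fun h : τ.1 = _ ∧ _ => ha (h.1 ▸ mem_insert_self a σ.1),
      zero_mul]

theorem sum_mul_indepCone_of_notMem {μ : G.indepFace n} (ha : a ∉ μ.1)
    (hN : Disjoint μ.1 (G.neighborFinset a)) (f : G.indepFace (n + 1) → ℝ) :
    ∑ ρ, f ρ * G.indepCone a n ρ μ = f (G.insertFace μ a ha hN) * faceSign (insert a μ.1) a := by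
  rw [Fintype.sum_eq_single (G.insertFace μ a ha hN), indepCone, of_apply, if_pos ⟨rfl, ha⟩]
  · rfl
  rintro ρ hρ
  rw [indepCone, of_apply, if_neg fun h => hρ (Subtype.ext h.1), mul_zero]

theorem sum_mul_indepCone_of_mem {μ : G.indepFace n} (ha : a ∈ μ.1)
    (f : G.indepFace (n + 1) → ℝ) : ∑ ρ, f ρ * G.indepCone a n ρ μ = 0 :=
  sum_eq_zero fun ρ _ => by rw [indepCone, of_apply, if_neg fun h => h.2 ha, mul_zero]

theorem indepBoundary_insertFace_mul_add_eq_zero {τ μ : G.indepFace (n + 1)} (haτ : a ∈ τ.1)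
    (haμ : a ∉ μ.1) (hN : Disjoint μ.1 (G.neighborFinset a)) :
    G.indepBoundary (n + 1) τ (G.insertFace μ a haμ hN) * faceSign (insert a μ.1) a
      + faceSign τ.1 a * G.indepBoundary n (G.eraseFace τ a haτ) μ = 0 := by
  by_cases hsub : τ.1.erase a ⊆ μ.1
  · obtain ⟨w, hw, hμ⟩ := exists_eq_insert_iff.2
      ⟨hsub, by rw [card_erase_of_mem haτ, τ.2.1, μ.2.1, Nat.add_sub_cancel]⟩
    set E := τ.1.erase a
    have hwa : w ≠ a := fun h => haμ (h ▸ hμ ▸ mem_insert_self w E)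
    have hτ : τ.1 = insert a E := (insert_erase haτ).symm
    have hwτ : w ∉ τ.1 := fun h => hw (mem_erase.2 ⟨hwa, h⟩)
    rw [indepBoundary_apply_of_eq_insert hwτ
        (show insert a μ.1 = insert w τ.1 by rw [← hμ, insert_comm, ← hτ]),
      indepBoundary_apply_of_eq_insert hw hμ.symm,
      show (G.insertFace μ a haμ hN).1 = insert a μ.1 from rfl, ← hμ, hτ]
    linear_combination (faceSign (insert a E) a * faceSign (insert a (insert w E)) a)
        * faceSign_swap (notMem_erase a τ.1) hw hwa.symm
      - (faceSign (insert a (insert w E)) w * faceSign (insert a (insert w E)) a)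
        * faceSign_mul_self (insert a E) a
      - (faceSign (insert a E) a * faceSign (insert w E) w)
        * faceSign_mul_self (insert a (insert w E)) a
  · rw [indepBoundary_apply_of_not_subset fun h => hsub (subset_insert_iff.1 h),
      indepBoundary_apply_of_not_subset hsub, zero_mul, mul_zero, add_zero]

theorem indepBoundary_mul_indepCone_add_apply (τ : G.indepFace (n + 1))
    {μ : G.indepFace (n + 1)} (hN : Disjoint μ.1 (G.neighborFinset a)) :
    (G.indepBoundary (n + 1) * G.indepCone a (n + 1) + G.indepCone a n * G.indepBoundary n) τ μ
      = (1 : Matrix (G.indepFace (n + 1)) (G.indepFace (n + 1)) ℝ) τ μ := by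
  rw [Matrix.add_apply, mul_apply, mul_apply, one_apply]
  by_cases haμ : a ∈ μ.1
  · rw [sum_mul_indepCone_of_mem haμ, zero_add]
    by_cases haτ : a ∈ τ.1
    · rw [sum_indepCone_mul_of_mem haτ]
      split_ifs with hτμ
      · subst hτμ
        rw [indepBoundary_apply_of_eq_insert (notMem_erase a τ.1) (insert_erase haτ).symm,
          faceSign_mul_self]
      · rw [indepBoundary_apply_of_not_subset fun h => hτμ (indepFace_eq_of_subset
          ((insert_erase haτ).symm.trans_subset (insert_subset haμ h))), mul_zero]
    · rw [sum_indepCone_mul_of_notMem haτ, if_neg fun h : τ = μ => haτ (h ▸ haμ)]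
  · rw [sum_mul_indepCone_of_notMem haμ hN]
    by_cases haτ : a ∈ τ.1
    · rw [sum_indepCone_mul_of_mem haτ, if_neg fun h : τ = μ => haμ (h ▸ haτ)]
      exact indepBoundary_insertFace_mul_add_eq_zero haτ haμ hN
    · rw [sum_indepCone_mul_of_notMem haτ, add_zero]
      split_ifs with hτμ
      · subst hτμ
        rw [indepBoundary_apply_of_eq_insert haτ rfl]
        exact faceSign_mul_self _ a
      · rw [indepBoundary_apply_of_not_subset fun h => hτμ (indepFace_eq_of_subset
          ((subset_insert_iff_of_notMem haτ).1 h)), zero_mul]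

theorem indepBoundary_indepCone_homotopy {x : G.indepFace (n + 1) → ℝ}
    (hx : ∀ σ, ¬Disjoint σ.1 (G.neighborFinset a) → x σ = 0) :
    G.indepBoundary (n + 1) *ᵥ (G.indepCone a (n + 1) *ᵥ x)
      + G.indepCone a n *ᵥ (G.indepBoundary n *ᵥ x) = x := by
  rw [mulVec_mulVec, mulVec_mulVec, ← add_mulVec]
  conv_rhs => rw [← one_mulVec x]
  ext τ
  refine sum_congr rfl fun μ _ => ?_
  by_cases hN : Disjoint μ.1 (G.neighborFinset a)
  · exact congrArg (· * x μ) (indepBoundary_mul_indepCone_add_apply τ hN)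
  · rw [hx μ hN, mul_zero, mul_zero]

variable {T : Finset V}

theorem indepBoundary_mulVec_mem_undominatedChains {y : G.indepFace (k + 1) → ℝ}
    (hy : y ∈ G.undominatedChains T (k + 1)) :
    G.indepBoundary k *ᵥ y ∈ G.undominatedChains T k := fun σ hσ =>
  sum_eq_zero fun τ _ => by
    change G.indepBoundary k σ τ * y τ = 0
    by_cases hστ : σ.1 ⊆ τ.1
    · rw [hy τ (hσ.mono hστ), mul_zero]
    · rw [indepBoundary_apply_of_not_subset hστ, zero_mul]

theorem indepCone_mulVec_mem_undominatedChains (ha : ∀ v ∈ T, a ∉ G.neighborFinset v)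
    {y : G.indepFace k → ℝ} (hy : y ∈ G.undominatedChains T k) :
    G.indepCone a k *ᵥ y ∈ G.undominatedChains T (k + 1) := fun τ hτ => by
  by_cases haτ : a ∈ τ.1
  · exact (sum_indepCone_mul_of_mem haτ y).trans (by rw [hy _ (hτ.erase ha), mul_zero])
  · exact sum_indepCone_mul_of_notMem haτ y

theorem exists_sub_indepBoundary_mulVec_mem_undominatedChains
    (ha : ∀ v ∈ T, a ∉ G.neighborFinset v) {z : G.indepFace (k + 1) → ℝ}
    (hz : G.indepBoundary k *ᵥ z = 0) (hzT : z ∈ G.undominatedChains (insert a T) (k + 1)) :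
    ∃ c, z - G.indepBoundary (k + 1) *ᵥ c ∈ G.undominatedChains T (k + 1) := by
  let s : G.indepFace (k + 1) → ℝ := fun σ => if G.TotallyDominates σ.1 T then z σ else 0
  have hy : z - s ∈ G.undominatedChains T (k + 1) := fun σ hσ => by
    simp only [s, Pi.sub_apply, if_pos hσ, sub_self]
  have hs : ∀ σ, ¬Disjoint σ.1 (G.neighborFinset a) → s σ = 0 := fun σ hσa => by
    simp only [s]
    split_ifs with hσ
    exacts [hzT σ (forall_mem_insert _ _ _ |>.2 ⟨hσa, hσ⟩), rfl]
  refine ⟨G.indepCone a (k + 1) *ᵥ s, ?_⟩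
  have hcone := indepBoundary_indepCone_homotopy hs
  rw [show G.indepBoundary k *ᵥ s = -(G.indepBoundary k *ᵥ (z - s)) by
    rw [mulVec_sub, hz, zero_sub, neg_neg], mulVec_neg] at hcone
  rw [eq_sub_of_add_eq hcone]
  convert sub_mem hy (indepCone_mulVec_mem_undominatedChains ha
    (indepBoundary_mulVec_mem_undominatedChains hy)) using 1
  abel

theorem IsNeighborhoodPacking.ker_inf_undominatedChains_le_range {S : Finset V}
    (hS : G.IsNeighborhoodPacking S) (hT : T ⊆ S) :
    LinearMap.ker (G.indepBoundary k).mulVecLin ⊓ G.undominatedChains T (k + 1)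
      ≤ LinearMap.range (G.indepBoundary (k + 1)).mulVecLin := by
  induction T using Finset.induction_on with
  | empty =>
    rintro z ⟨-, hz⟩
    have : z = 0 := funext fun σ => hz σ fun v hv => absurd hv (notMem_empty v)
    exact this ▸ Submodule.zero_mem _
  | @insert a T haT ih =>
    rintro z ⟨hz, hzT⟩
    have ha : ∀ v ∈ T, a ∉ G.neighborFinset v := fun v hv =>
      hS.notMem_neighborFinset (hT (mem_insert_self a T)) (hT (mem_insert_of_mem hv))
        fun h => haT (h ▸ hv)
    obtain ⟨c, hc⟩ := exists_sub_indepBoundary_mulVec_mem_undominatedChains ha hz hzT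
    have hcycle : z - G.indepBoundary (k + 1) *ᵥ c
        ∈ LinearMap.ker (G.indepBoundary k).mulVecLin := by
      rw [LinearMap.mem_ker, mulVecLin_apply, mulVec_sub, mulVec_mulVec,
        indepBoundary_mul_indepBoundary, zero_mulVec, sub_zero]
      exact hz
    obtain ⟨c', hc'⟩ := ih (fun v hv => hT (mem_insert_of_mem hv)) ⟨hcycle, hc⟩
    exact ⟨c' + c, by rw [map_add, hc', mulVecLin_apply, sub_add_cancel]⟩

omit [LinearOrder V] in
theorem IsNeighborhoodPacking.card_totallyDominates_le {S : Finset V}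
    (hS : G.IsNeighborhoodPacking S) (k : ℕ) :
    Fintype.card {σ : G.indepFace k // G.TotallyDominates σ.1 S}
      ≤ ∑ m ∈ Icc #S k, (∑ v ∈ S, G.degree v).choose m
          * (Fintype.card V - ∑ v ∈ S, G.degree v).choose (k - m) := by
  rw [← hS.card_biUnion_neighborFinset, Fintype.card_subtype]
  refine (card_le_card_of_injOn Subtype.val (fun σ hσ => ?_) Subtype.val_injective.injOn).trans
    (card_filter_powersetCard_le_sum_choose _ #S k)
  exact mem_filter.2 ⟨mem_powersetCard.2 ⟨subset_univ _, σ.2.1⟩,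
    hS.card_le_card_inter_biUnion (mem_filter.1 hσ).2⟩

theorem IsNeighborhoodPacking.indepHomologyDim_le_card_totallyDominates {S : Finset V}
    (hS : G.IsNeighborhoodPacking S) (k : ℕ) :
    G.indepHomologyDim k ≤ Fintype.card {σ : G.indepFace (k + 1) // G.TotallyDominates σ.1 S} := by
  have := Submodule.finrank_le_finrank_add_card
    (p := fun σ : G.indepFace (k + 1) => G.TotallyDominates σ.1 S) fun z hz hzS =>
      hS.ker_inf_undominatedChains_le_range subset_rfl ⟨hz, hzS⟩
  unfold indepHomologyDim
  omega

end SimpleGraph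

/-- Let `S ⊆ V` be a neighborhood packing of `G` (the closed neighborhoods
of the vertices of `S` are pairwise disjoint), and `deg S = ∑_{v ∈ S} deg v`. Then for all
`k ≥ 0`,
`dim H̃_k(I(G); ℝ) ≤ ∑_{m = |S|}^{k+1} C(deg S, m) · C(|V| - deg S, k + 1 - m)`.
In particular, `H̃_k(I(G); ℝ) = 0` for all `k ≤ |S| - 2`. -/
theorem betti_indep_le_of_packing (G : SimpleGraph V) [DecidableRel G.Adj] (S : Finset V)
    (hS : ∀ u ∈ S, ∀ v ∈ S, u ≠ v →
      Disjoint (insert u (G.neighborFinset u)) (insert v (G.neighborFinset v))) :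
    (∀ k : ℕ, G.indepHomologyDim k ≤
      ∑ m ∈ Finset.Icc S.card (k + 1),
        Nat.choose (∑ v ∈ S, G.degree v) m *
          Nat.choose (Fintype.card V - ∑ v ∈ S, G.degree v) (k + 1 - m)) ∧
    (∀ k : ℕ, k + 2 ≤ S.card → G.indepHomologyDim k = 0) := by
  have hpacking : G.IsNeighborhoodPacking S := hS
  have hbound (k : ℕ) := (hpacking.indepHomologyDim_le_card_totallyDominates k).trans
    (hpacking.card_totallyDominates_le (k + 1))
  refine ⟨hbound, fun k hk => Nat.eq_zero_of_le_zero ((hbound k).trans_eq ?_)⟩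
  rw [Finset.Icc_eq_empty (by omega), Finset.sum_empty]
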